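/- The good colorings of A ⊔ B with k green elements (|A|=a, |B|=b) are in bijection with the k-element faces of the simplicial complex Δ defined on vertices {x_{i,j}} ∪ {y_{i,j}} with the minimal non-faces {x_{i,j},x_{i',j'}} (i≤i', j≥j'), {y_{i,j},y_{i',j'}} (i≤i', j≥j'), {x_{i,j},y_{i',j}}, {x_{i,j},y_{i,j'}}. Consequently, the number of k-element faces of Δ is C(2k,k)·C(a,k)·C(b,k). -/

import Mathlib

open Finset

/-- Vertices of the complex `Δ`: `Sum.inl (i,j)` is `x_{i,j}`, `Sum.inr (i,j)` is `y_{i,j}`. -/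
abbrev DeltaVertex (a b : ℕ) := (Fin a × Fin b) ⊕ (Fin a × Fin b)

/-- `F` is a face of `Δ`: it contains none of the minimal non-faces
`{x_{i,j}, x_{i',j'}}` with `i ≤ i'`, `j ≥ j'`; `{y_{i,j}, y_{i',j'}}` with `i ≤ i'`, `j ≥ j'`;
`{x_{i,j}, y_{i',j}}`; `{x_{i,j}, y_{i,j'}}`. -/
def IsFaceDelta {a b : ℕ} (F : Finset (DeltaVertex a b)) : Prop :=
  (∀ p q : Fin a × Fin b, Sum.inl p ∈ F → Sum.inl q ∈ F → p ≠ q →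
      ¬(p.1 ≤ q.1 ∧ q.2 ≤ p.2)) ∧
  (∀ p q : Fin a × Fin b, Sum.inr p ∈ F → Sum.inr q ∈ F → p ≠ q →
      ¬(p.1 ≤ q.1 ∧ q.2 ≤ p.2)) ∧
  (∀ p q : Fin a × Fin b, Sum.inl p ∈ F → Sum.inr q ∈ F → p.1 ≠ q.1 ∧ p.2 ≠ q.2)

/-- Partial colors: red, green, or uncolored. -/
inductive Col3
  | R | G | U
deriving DecidableEq

instance : Fintype Col3 :=
  ⟨{Col3.R, Col3.G, Col3.U}, fun x => by cases x <;> simp⟩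

/-- A partial coloring of `Fin a ⊕ Fin b` is good if the number of green elements of `A`
equals the number of red elements of `B` and the number of green elements of `B` equals
the number of red elements of `A`. -/
def IsGood3 {a b : ℕ} (c : Fin a ⊕ Fin b → Col3) : Prop :=
  (Finset.univ.filter (fun x : Fin a => c (Sum.inl x) = Col3.G)).card
      = (Finset.univ.filter (fun y : Fin b => c (Sum.inr y) = Col3.R)).card ∧
  (Finset.univ.filter (fun y : Fin b => c (Sum.inr y) = Col3.G)).card
      = (Finset.univ.filter (fun x : Fin a => c (Sum.inl x) = Col3.R)).card

/-- Number of green elements of a partial coloring. -/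
def greens {a b : ℕ} (c : Fin a ⊕ Fin b → Col3) : ℕ :=
  (Finset.univ.filter (fun z : Fin a ⊕ Fin b => c z = Col3.G)).card


/-!
A face of `Δ` splits into its `x`-part and its `y`-part. By the first two kinds of minimal
non-faces each part is a chain in `[a] × [b]` that increases strictly in both coordinates, and
such a chain is the graph of the increasing bijection between its two projections. So a face is
the same as four sets `G_A, R_A ⊆ A`, `G_B, R_B ⊆ B` with `|G_A| = |R_B|` (the `x`-part) and
`|R_A| = |G_B|` (the `y`-part); the mixed non-faces say exactly that `G_A ∩ R_A = ∅` and
`G_B ∩ R_B = ∅`, i.e. that these sets form a good partial coloring.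

A good coloring with `k` greens has `|G_A| + |R_A| = |G_A| + |G_B| = k` colored elements in `A`
and likewise `k` in `B`; conversely any choice of `k` colored elements on each side and of `k`
green ones among these `2k` gives a good coloring. Hence the count `C(2k,k) C(a,k) C(b,k)`.
-/

variable {α β : Type*}

section StrictChain

variable [LinearOrder α] [LinearOrder β]

def IsStrictChain (S : Finset (α × β)) : Prop :=
  ∀ p ∈ S, ∀ q ∈ S, p ≠ q → ¬(p.1 ≤ q.1 ∧ q.2 ≤ p.2)

theorem IsStrictChain.fst_lt_iff {S : Finset (α × β)} (hS : IsStrictChain S) {p q : α × β}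
    (hp : p ∈ S) (hq : q ∈ S) : p.1 < q.1 ↔ p.2 < q.2 := by
  constructor
  · intro h
    by_contra h'
    exact hS p hp q hq (fun e => h.ne (congrArg Prod.fst e)) ⟨h.le, not_lt.mp h'⟩
  · intro h
    by_contra h'
    exact hS q hq p hp (fun e => h.ne (congrArg Prod.snd e).symm) ⟨not_lt.mp h', h.le⟩

theorem IsStrictChain.injOn_fst {S : Finset (α × β)} (hS : IsStrictChain S) :
    Set.InjOn Prod.fst (S : Set (α × β)) := by
  intro p hp q hq h
  by_contra hne
  rcases le_total p.2 q.2 with h2 | h2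
  · exact hS q hq p hp (Ne.symm hne) ⟨h.ge, h2⟩
  · exact hS p hp q hq hne ⟨h.le, h2⟩

theorem IsStrictChain.injOn_snd {S : Finset (α × β)} (hS : IsStrictChain S) :
    Set.InjOn Prod.snd (S : Set (α × β)) := by
  intro p hp q hq h
  by_contra hne
  rcases le_total p.1 q.1 with h1 | h1
  · exact hS p hp q hq hne ⟨h1, h.ge⟩
  · exact hS q hq p hp (Ne.symm hne) ⟨h1, h.le⟩

theorem IsStrictChain.card_image_fst {S : Finset (α × β)} (hS : IsStrictChain S) :
    #(S.image Prod.fst) = #S :=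
  card_image_of_injOn hS.injOn_fst

theorem IsStrictChain.card_image_snd {S : Finset (α × β)} (hS : IsStrictChain S) :
    #(S.image Prod.snd) = #S :=
  card_image_of_injOn hS.injOn_snd

/-- The graph of the increasing bijection `I → J`. -/
def chainGraph (I : Finset α) (J : Finset β) (h : #I = #J) : Finset (α × β) :=
  univ.image fun m : Fin #I => (I.orderEmbOfFin rfl m, J.orderEmbOfFin h.symm m)

theorem isStrictChain_chainGraph (I : Finset α) (J : Finset β) (h : #I = #J) :
    IsStrictChain (chainGraph I J h) := by
  simp only [IsStrictChain, chainGraph, mem_image, mem_univ, true_and]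
  rintro _ ⟨m, rfl⟩ _ ⟨n, rfl⟩ hne ⟨hmn, hnm⟩
  simp only [OrderEmbedding.le_iff_le] at hmn hnm
  exact hne (by rw [le_antisymm hmn hnm])

theorem image_fst_chainGraph (I : Finset α) (J : Finset β) (h : #I = #J) :
    (chainGraph I J h).image Prod.fst = I := by
  rw [chainGraph, image_image]
  exact image_orderEmbOfFin_univ I rfl

theorem image_snd_chainGraph (I : Finset α) (J : Finset β) (h : #I = #J) :
    (chainGraph I J h).image Prod.snd = J := by
  rw [chainGraph, image_image]
  exact image_orderEmbOfFin_univ J h.symm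

theorem card_chainGraph (I : Finset α) (J : Finset β) (h : #I = #J) :
    #(chainGraph I J h) = #I := by
  rw [← (isStrictChain_chainGraph I J h).card_image_fst, image_fst_chainGraph]

theorem IsStrictChain.chainGraph_image {S : Finset (α × β)} (hS : IsStrictChain S)
    (h : #(S.image Prod.fst) = #(S.image Prod.snd)) :
    chainGraph (S.image Prod.fst) (S.image Prod.snd) h = S := by
  set I := S.image Prod.fst
  set J := S.image Prod.snd
  -- Lift the enumeration of `I` to `S`; its second coordinates then enumerate `J` increasingly.
  have hlift : ∀ m : Fin #I, ∃ p ∈ S, p.1 = I.orderEmbOfFin rfl m := fun m =>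
    mem_image.mp (I.orderEmbOfFin_mem rfl m)
  choose p hpS hp1 using hlift
  have hp2 : (fun m => (p m).2) = J.orderEmbOfFin h.symm :=
    orderEmbOfFin_unique h.symm (fun m => mem_image_of_mem _ (hpS m)) fun m n hmn =>
      (hS.fst_lt_iff (hpS m) (hpS n)).mp (by simpa [hp1] using hmn)
  refine eq_of_subset_of_card_le ?_ ?_
  · simp only [chainGraph, subset_iff, mem_image, mem_univ, true_and]
    rintro _ ⟨m, rfl⟩
    rw [← hp1, ← congrFun hp2 m]
    exact hpS m
  · rw [card_chainGraph, hS.card_image_fst]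

end StrictChain

variable (α β) in
/-- The green and red sets `(G, R)` of a good partial coloring of `α ⊕ β` with `k` greens. -/
abbrev GoodGreenRed (k : ℕ) :=
  {p : Finset (α ⊕ β) × Finset (α ⊕ β) //
    Disjoint p.1 p.2 ∧ #p.1.toLeft = #p.2.toRight ∧ #p.1.toRight = #p.2.toLeft ∧ #p.1 = k}

section Sum

variable [Fintype α] [Fintype β]

theorem toLeft_filter_univ (P : α ⊕ β → Prop) [DecidablePred P] :
    (univ.filter P).toLeft = univ.filter (fun x => P (Sum.inl x)) := by
  ext; simp

theorem toRight_filter_univ (P : α ⊕ β → Prop) [DecidablePred P] :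
    (univ.filter P).toRight = univ.filter (fun y => P (Sum.inr y)) := by
  ext; simp

end Sum

def coloringEquiv (X : Type*) [Fintype X] [DecidableEq X] :
    (X → Col3) ≃ {p : Finset X × Finset X // Disjoint p.1 p.2} where
  toFun c := ⟨(univ.filter (c · = Col3.G), univ.filter (c · = Col3.R)), by
    simp only [disjoint_left, mem_filter, mem_univ, true_and]
    intro x hG hR
    exact Col3.noConfusion (hG.symm.trans hR)⟩
  invFun p x := if x ∈ p.1.1 then Col3.G else if x ∈ p.1.2 then Col3.R else Col3.U
  left_inv c := by
    funext x
    rcases h : c x <;> simp [h]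
  right_inv p := by
    obtain ⟨⟨G, R⟩, hGR⟩ := p
    have hGR' := disjoint_left.mp hGR
    ext x <;> by_cases hG : x ∈ G <;> by_cases hR : x ∈ R <;> simp_all

def goodColoringEquiv (a b k : ℕ) :
    {c : Fin a ⊕ Fin b → Col3 // IsGood3 c ∧ greens c = k} ≃
      GoodGreenRed (Fin a) (Fin b) k :=
  ((coloringEquiv _).subtypeEquiv fun c => by
      simp only [IsGood3, greens, coloringEquiv, Equiv.coe_fn_mk, toLeft_filter_univ,
        toRight_filter_univ]
      tauto).trans
    (Equiv.subtypeSubtypeEquivSubtypeInter _ _)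

section Face

variable [LinearOrder α] [LinearOrder β]

/-- `i ∈ A` is green iff some `x_{i,j}` is in `F`; `j ∈ B` is green iff some `y_{i,j}` is. -/
def greenOfFace (F : Finset ((α × β) ⊕ (α × β))) : Finset (α ⊕ β) :=
  (F.toLeft.image Prod.fst).disjSum (F.toRight.image Prod.snd)

def redOfFace (F : Finset ((α × β) ⊕ (α × β))) : Finset (α ⊕ β) :=
  (F.toRight.image Prod.fst).disjSum (F.toLeft.image Prod.snd)

def faceOfGreenRed (G R : Finset (α ⊕ β)) (h₁ : #G.toLeft = #R.toRight)
    (h₂ : #R.toLeft = #G.toRight) : Finset ((α × β) ⊕ (α × β)) :=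
  (chainGraph G.toLeft R.toRight h₁).disjSum (chainGraph R.toLeft G.toRight h₂)

theorem disjoint_greenOfFace_redOfFace_iff {F : Finset ((α × β) ⊕ (α × β))} :
    Disjoint (greenOfFace F) (redOfFace F) ↔
      ∀ p ∈ F.toLeft, ∀ q ∈ F.toRight, p.1 ≠ q.1 ∧ p.2 ≠ q.2 := by
  simp only [greenOfFace, redOfFace, disjoint_left, mem_disjSum, mem_image, mem_toLeft,
    mem_toRight]
  grind

theorem greenOfFace_faceOfGreenRed (G R : Finset (α ⊕ β)) (h₁ : #G.toLeft = #R.toRight)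
    (h₂ : #R.toLeft = #G.toRight) : greenOfFace (faceOfGreenRed G R h₁ h₂) = G := by
  simp only [greenOfFace, faceOfGreenRed, toLeft_disjSum, toRight_disjSum, image_fst_chainGraph,
    image_snd_chainGraph, toLeft_disjSum_toRight]

theorem redOfFace_faceOfGreenRed (G R : Finset (α ⊕ β)) (h₁ : #G.toLeft = #R.toRight)
    (h₂ : #R.toLeft = #G.toRight) : redOfFace (faceOfGreenRed G R h₁ h₂) = R := by
  simp only [redOfFace, faceOfGreenRed, toLeft_disjSum, toRight_disjSum, image_fst_chainGraph,
    image_snd_chainGraph, toLeft_disjSum_toRight]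

end Face

theorem isFaceDelta_iff {a b : ℕ} {F : Finset (DeltaVertex a b)} :
    IsFaceDelta F ↔ IsStrictChain F.toLeft ∧ IsStrictChain F.toRight ∧
      ∀ p ∈ F.toLeft, ∀ q ∈ F.toRight, p.1 ≠ q.1 ∧ p.2 ≠ q.2 := by
  simp only [IsFaceDelta, IsStrictChain, mem_toLeft, mem_toRight]
  grind

theorem isFaceDelta_faceOfGreenRed {a b : ℕ} {G R : Finset (Fin a ⊕ Fin b)} (hGR : Disjoint G R)
    (h₁ : #G.toLeft = #R.toRight) (h₂ : #R.toLeft = #G.toRight) :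
    IsFaceDelta (faceOfGreenRed G R h₁ h₂) := by
  refine isFaceDelta_iff.mpr ⟨?_, ?_, ?_⟩
  · simpa [faceOfGreenRed] using isStrictChain_chainGraph _ _ h₁
  · simpa [faceOfGreenRed] using isStrictChain_chainGraph _ _ h₂
  · rw [← disjoint_greenOfFace_redOfFace_iff, greenOfFace_faceOfGreenRed,
      redOfFace_faceOfGreenRed]
    exact hGR

theorem faceOfGreenRed_greenOfFace {a b : ℕ} {F : Finset (DeltaVertex a b)} (hF : IsFaceDelta F)
    (h₁ : #(greenOfFace F).toLeft = #(redOfFace F).toRight)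
    (h₂ : #(redOfFace F).toLeft = #(greenOfFace F).toRight) :
    faceOfGreenRed (greenOfFace F) (redOfFace F) h₁ h₂ = F := by
  obtain ⟨hx, hy, -⟩ := isFaceDelta_iff.mp hF
  simp only [faceOfGreenRed, greenOfFace, redOfFace, toLeft_disjSum, toRight_disjSum]
  rw [hx.chainGraph_image, hy.chainGraph_image, toLeft_disjSum_toRight]

theorem card_greenOfFace {a b : ℕ} {F : Finset (DeltaVertex a b)} (hF : IsFaceDelta F) :
    #(greenOfFace F) = #F := by
  obtain ⟨hx, hy, -⟩ := isFaceDelta_iff.mp hF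
  rw [greenOfFace, card_disjSum, hx.card_image_fst, hy.card_image_snd,
    card_toLeft_add_card_toRight]

def faceEquiv (a b k : ℕ) :
    {F : Finset (DeltaVertex a b) // IsFaceDelta F ∧ #F = k} ≃
      GoodGreenRed (Fin a) (Fin b) k where
  toFun F := ⟨(greenOfFace F.1, redOfFace F.1), by
    obtain ⟨F, hF, rfl⟩ := F
    obtain ⟨hx, hy, hxy⟩ := isFaceDelta_iff.mp hF
    refine ⟨disjoint_greenOfFace_redOfFace_iff.mpr hxy, ?_, ?_, card_greenOfFace hF⟩ <;>
      simp [greenOfFace, redOfFace, hx.card_image_fst, hx.card_image_snd, hy.card_image_fst,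
        hy.card_image_snd]⟩
  invFun p := ⟨faceOfGreenRed p.1.1 p.1.2 p.2.2.1 p.2.2.2.1.symm, by
    obtain ⟨⟨G, R⟩, hGR, h₁, h₂, rfl⟩ := p
    have hF := isFaceDelta_faceOfGreenRed hGR h₁ h₂.symm
    refine ⟨hF, ?_⟩
    rw [← card_greenOfFace hF, greenOfFace_faceOfGreenRed]⟩
  left_inv F := Subtype.ext (faceOfGreenRed_greenOfFace F.2.1 _ _)
  right_inv p :=
    Subtype.ext (Prod.ext (greenOfFace_faceOfGreenRed ..) (redOfFace_faceOfGreenRed ..))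

section Count

variable [DecidableEq α] [DecidableEq β]

theorem card_toLeft_union_of_disjoint {G R : Finset (α ⊕ β)} (h : Disjoint G R) :
    #(G ∪ R).toLeft = #G.toLeft + #R.toLeft := by
  rw [toLeft_union, card_union_of_disjoint]
  exact disjoint_left.mpr fun x hG hR => disjoint_left.mp h (mem_toLeft.mp hG) (mem_toLeft.mp hR)

theorem card_toRight_union_of_disjoint {G R : Finset (α ⊕ β)} (h : Disjoint G R) :
    #(G ∪ R).toRight = #G.toRight + #R.toRight := by
  rw [toRight_union, card_union_of_disjoint]
  exact disjoint_left.mpr fun x hG hR => disjoint_left.mp h (mem_toRight.mp hG) (mem_toRight.mp hR)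

theorem goodGreenRed_iff {G R : Finset (α ⊕ β)} (h : Disjoint G R) {k : ℕ} :
    (#G.toLeft = #R.toRight ∧ #G.toRight = #R.toLeft ∧ #G = k) ↔
      (#(G ∪ R).toLeft = k ∧ #(G ∪ R).toRight = k ∧ #G = k) := by
  have hG := card_toLeft_add_card_toRight (u := G)
  rw [card_toLeft_union_of_disjoint h, card_toRight_union_of_disjoint h]
  omega

end Count

theorem card_filter_card_toLeft_toRight [Fintype α] [Fintype β] (k : ℕ) :
    #(univ.filter fun C : Finset (α ⊕ β) => #C.toLeft = k ∧ #C.toRight = k) =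
      (Fintype.card α).choose k * (Fintype.card β).choose k := by
  have : (univ.filter fun C : Finset (α ⊕ β) => #C.toLeft = k ∧ #C.toRight = k) =
      (powersetCard k univ ×ˢ powersetCard k univ).map sumEquiv.symm.toEquiv.toEmbedding := by
    ext C
    simp
  rw [this, card_map, card_product, card_powersetCard, card_powersetCard, card_univ, card_univ]

theorem card_goodGreenRed [Fintype α] [Fintype β] [DecidableEq α] [DecidableEq β] (k : ℕ) :
    Fintype.card (GoodGreenRed α β k) =
      (2 * k).choose k * (Fintype.card α).choose k * (Fintype.card β).choose k := by
  -- `(G, R) ↦ (G ∪ R, G)`: choose the `k + k` colored elements, then the `k` green ones.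
  have hcolored : Fintype.card (GoodGreenRed α β k) =
      #((univ.filter fun C : Finset (α ⊕ β) => #C.toLeft = k ∧ #C.toRight = k).sigma
        fun C => powersetCard k C) := by
    rw [Fintype.card_subtype]
    refine card_nbij' (fun p => ⟨p.1 ∪ p.2, p.1⟩) (fun q => (q.2, q.1 \ q.2)) ?_ ?_ ?_ ?_
    · rintro ⟨G, R⟩ hp
      simp only [mem_coe, mem_filter, mem_univ, true_and] at hp
      obtain ⟨hGR, h⟩ := hp
      rw [goodGreenRed_iff hGR] at h
      simp [h, subset_union_left]
    · rintro ⟨C, G⟩ hq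
      simp only [mem_coe, mem_sigma, mem_filter, mem_univ, true_and, mem_powersetCard] at hq
      obtain ⟨hC, hGC, hG⟩ := hq
      simp only [mem_coe, mem_filter, mem_univ, true_and]
      refine ⟨disjoint_sdiff, (goodGreenRed_iff disjoint_sdiff).mpr ?_⟩
      rw [union_sdiff_of_subset hGC]
      exact ⟨hC.1, hC.2, hG⟩
    · rintro ⟨G, R⟩ hp
      simp only [mem_coe, mem_filter, mem_univ, true_and] at hp
      simp [union_sdiff_cancel_left hp.1]
    · rintro ⟨C, G⟩ hq
      simp only [mem_coe, mem_sigma, mem_powersetCard] at hq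
      simp [union_sdiff_of_subset hq.2.1]
  have hfiber :
      ∀ C ∈ univ.filter (fun C : Finset (α ⊕ β) => #C.toLeft = k ∧ #C.toRight = k),
        #(powersetCard k C) = (2 * k).choose k := by
    intro C hC
    rw [mem_filter] at hC
    rw [card_powersetCard, ← card_toLeft_add_card_toRight, hC.2.1, hC.2.2, two_mul]
  rw [hcolored, card_sigma, sum_congr rfl hfiber, sum_const, smul_eq_mul,
    card_filter_card_toLeft_toRight]
  ring

theorem stmt_13 (a b : ℕ) (k : ℕ) :
    Nonempty
        ({c : Fin a ⊕ Fin b → Col3 // IsGood3 c ∧ greens c = k} ≃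
          {F : Finset (DeltaVertex a b) // IsFaceDelta F ∧ F.card = k}) ∧
      {F : Finset (DeltaVertex a b) | IsFaceDelta F ∧ F.card = k}.ncard
        = (2 * k).choose k * a.choose k * b.choose k := by
  refine ⟨⟨(goodColoringEquiv a b k).trans (faceEquiv a b k).symm⟩, ?_⟩
  rw [← Nat.card_coe_set_eq, Set.coe_ofPred, Nat.card_congr (faceEquiv a b k),
    Nat.card_eq_fintype_card, card_goodGreenRed, Fintype.card_fin, Fintype.card_fin]
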